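/- Let (𝒜,A₁,A₂) be a Manin triple for Hom-pre-Lie algebras, with 𝒜 finite-dimensional and its structure map α bijective, with bilinear form ω. Then there exists a Hom-pre-Lie algebra structure ∘ on A₁* with structure map (α₁^{-1})* such that (A₁⊕A₁*, A₁, A₁*), equipped with the product ⋄ given by (x+ξ)⋄(y+η) = x·y + 𝔞𝔡^⋆_ξ y − ℛ^⋆_η x + ξ∘η + ad^⋆_x η − R^⋆_y ξ, the structure map α₁⊕(α₁^{-1})*, and the bilinear form ω̄(x+ξ, y+η) = ⟨ξ,y⟩ − ⟨η,x⟩, is a Manin triple for Hom-pre-Lie algebras (the standard Manin triple), and the linear map f: 𝒜 → A₁⊕A₁* defined by f(x+u) = x + ω(u,·)|_{A₁} for x ∈ A₁, u ∈ A₂ is an isomorphism of Manin triples: f is a bijective linear map satisfying f(X·Y) = f(X)⋄f(Y) and f∘α = (α₁⊕(α₁^{-1})*)∘f, f(A₁) = A₁, f(A₂) = A₁*, and ω(X,Y) = ω̄(f(X),f(Y)) for all X,Y ∈ 𝒜. -/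

import Mathlib

open TensorProduct LinearMap Module

/-- The additive group structure on a dual space, registered locally below so that
instance search finds it inside nested linear-map types (port repair). -/
@[reducible] def dualAddCommGroupH {K : Type*} [Field K] {A : Type*} [AddCommGroup A]
    [Module K A] : AddCommGroup (A →ₗ[K] K) :=
  LinearMap.addCommGroup

section Defs

attribute [local instance] dualAddCommGroupH

variable {K : Type*} [Field K]

section Basic
variable {A : Type*} [AddCommGroup A] [Module K A]
variable {B : Type*} [AddCommGroup B] [Module K B]
variable {V : Type*} [AddCommGroup V] [Module K V]

/-- A Hom-pre-Lie algebra structure. -/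
def IsHomPreLie (m : A →ₗ[K] A →ₗ[K] A) (α : A →ₗ[K] A) : Prop :=
  (∀ x y, α (m x y) = m (α x) (α y)) ∧
  ∀ x y z, m (m x y) (α z) - m (α x) (m y z) = m (m y x) (α z) - m (α y) (m x z)

/-- A Hom-Lie algebra structure. -/
def IsHomLie (br : A →ₗ[K] A →ₗ[K] A) (φ : A →ₗ[K] A) : Prop :=
  (∀ x y, br x y = - br y x) ∧
  (∀ x y, φ (br x y) = br (φ x) (φ y)) ∧
  ∀ x y z, br (φ x) (br y z) + br (φ y) (br z x) + br (φ z) (br x y) = 0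

/-- A representation of a Hom-Lie algebra on `V` with respect to `β`. -/
def IsHomLieRep (br : A →ₗ[K] A →ₗ[K] A) (φ : A →ₗ[K] A)
    (β : Module.End K V) (ρ : A →ₗ[K] Module.End K V) : Prop :=
  (∀ x, ρ (φ x) * β = β * ρ x) ∧
  ∀ x y, ρ (br x y) * β = ρ (φ x) * ρ y - ρ (φ y) * ρ x

/-- A representation of a Hom-pre-Lie algebra on `V` with respect to `β`. -/
def IsHomPreLieRep (m : A →ₗ[K] A →ₗ[K] A) (α : A →ₗ[K] A)
    (β : Module.End K V) (ρ μ : A →ₗ[K] Module.End K V) : Prop :=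
  IsHomLieRep (m - m.flip) α β ρ ∧
  (∀ x, β * μ x = μ (α x) * β) ∧
  ∀ x y, μ (α y) * μ x - μ (m x y) * β = μ (α y) * ρ x - ρ (α x) * μ y

/-- A 1-cocycle of a Hom-Lie algebra with respect to a representation. -/
def IsHomLieCocycle (br : A →ₗ[K] A →ₗ[K] A) (φ : A →ₗ[K] A)
    (ρ : A →ₗ[K] Module.End K V) (δ : A →ₗ[K] V) : Prop :=
  ∀ x y, δ (br x y) = ρ (φ x) (δ y) - ρ (φ y) (δ x)

/-- A matched pair of Hom-Lie algebras. -/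
def IsHomLieMatchedPair (brA : A →ₗ[K] A →ₗ[K] A) (φA : A →ₗ[K] A)
    (brB : B →ₗ[K] B →ₗ[K] B) (φB : B →ₗ[K] B)
    (ρ : A →ₗ[K] Module.End K B) (ρ' : B →ₗ[K] Module.End K A) : Prop :=
  IsHomLie brA φA ∧ IsHomLie brB φB ∧
  IsHomLieRep brA φA φB ρ ∧ IsHomLieRep brB φB φA ρ' ∧
  (∀ x y x', ρ' (φB x') (brA x y) =
    brA (ρ' x' x) (φA y) + brA (φA x) (ρ' x' y) + ρ' (ρ y x') (φA x) - ρ' (ρ x x') (φA y)) ∧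
  ∀ x x' y', ρ (φA x) (brB x' y') =
    brB (ρ x x') (φB y') + brB (φB x') (ρ x y') + ρ (ρ' y' x) (φB x') - ρ (ρ' x' x) (φB y')

/-- A matched pair of Hom-pre-Lie algebras. -/
def IsHomPreLieMatchedPair (mA : A →ₗ[K] A →ₗ[K] A) (αA : A →ₗ[K] A)
    (mB : B →ₗ[K] B →ₗ[K] B) (αB : B →ₗ[K] B)
    (lA rA : A →ₗ[K] Module.End K B) (lB rB : B →ₗ[K] Module.End K A) : Prop :=
  IsHomPreLie mA αA ∧ IsHomPreLie mB αB ∧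
  IsHomPreLieRep mA αA αB lA rA ∧ IsHomPreLieRep mB αB αA lB rB ∧
  (∀ (x : A) (a b : B), rA (αA x) (mB a b - mB b a) =
    rA (lB b x) (αB a) - rA (lB a x) (αB b) + mB (αB a) (rA x b) - mB (αB b) (rA x a)) ∧
  (∀ (x : A) (a b : B), lA (αA x) (mB a b) =
    -(lA (lB a x - rB a x) (αB b)) + mB (lA x a - rA x a) (αB b)
      + rA (rB b x) (αB a) + mB (αB a) (lA x b)) ∧
  (∀ (a : B) (x y : A), rB (αB a) (mA x y - mA y x) =
    rB (lA y a) (αA x) - rB (lA x a) (αA y) + mA (αA x) (rB a y) - mA (αA y) (rB a x)) ∧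
  ∀ (a : B) (x y : A), lB (αB a) (mA x y) =
    -(lB (lA x a - rA x a) (αA y)) + mA (lB a x - rB a x) (αA y)
      + rB (rA y a) (αA x) + mA (αA x) (lB a y)

/-- A Hom-L-dendriform algebra structure. -/
def IsHomLDendriform (tr tl : A →ₗ[K] A →ₗ[K] A) (α : A →ₗ[K] A) : Prop :=
  (∀ x y, α (tr x y) = tr (α x) (α y)) ∧
  (∀ x y, α (tl x y) = tl (α x) (α y)) ∧
  (∀ x y z, tr (tr x y) (α z) + tr (tl x y) (α z) + tr (α y) (tr x z)
      - tr (tl y x) (α z) - tr (tr y x) (α z) - tr (α x) (tr y z) = 0) ∧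
  ∀ x y z, tl (tr x y) (α z) + tl (α y) (tr x z) + tl (α y) (tl x z)
      - tl (tl y x) (α z) - tr (α x) (tl y z) = 0

/-- A Hom-O-operator on a Hom-pre-Lie algebra with respect to a representation. -/
def IsHomOOperator (m : A →ₗ[K] A →ₗ[K] A) (α : A →ₗ[K] A)
    (β : V ≃ₗ[K] V) (ρ μ : A →ₗ[K] Module.End K V) (T : V →ₗ[K] A) : Prop :=
  (∀ v, T (β v) = α (T v)) ∧
  ∀ u v, m (T u) (T v) = T (ρ (T (β.symm u)) v + μ (T (β.symm v)) u)

/-- A quadratic Hom-pre-Lie algebra. -/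
def IsQuadraticHomPreLie (m : A →ₗ[K] A →ₗ[K] A) (α : A →ₗ[K] A)
    (ω : A →ₗ[K] A →ₗ[K] K) : Prop :=
  IsHomPreLie m α ∧
  (∀ x y, ω x y = - ω y x) ∧
  (∀ x, (∀ y, ω x y = 0) → x = 0) ∧
  (∀ x y, ω (α x) (α y) = ω x y) ∧
  ∀ x y z, ω (m x y) (α z) = - ω (α y) (m x z - m z x)

/-- A Manin triple for Hom-pre-Lie algebras. -/
def IsManinTriple (m : A →ₗ[K] A →ₗ[K] A) (α : A →ₗ[K] A)
    (ω : A →ₗ[K] A →ₗ[K] K) (A1 A2 : Submodule K A) : Prop :=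
  IsQuadraticHomPreLie m α ω ∧
  (∀ x ∈ A1, ∀ y ∈ A1, m x y ∈ A1) ∧ (∀ x ∈ A1, α x ∈ A1) ∧
  (∀ x ∈ A2, ∀ y ∈ A2, m x y ∈ A2) ∧ (∀ x ∈ A2, α x ∈ A2) ∧
  (∀ x ∈ A1, ∀ y ∈ A1, ω x y = 0) ∧ (∀ x ∈ A2, ∀ y ∈ A2, ω x y = 0) ∧
  IsCompl A1 A2

/-- A Hessian structure on a Hom-pre-Lie algebra. -/
def IsHessian (m : A →ₗ[K] A →ₗ[K] A) (α : A →ₗ[K] A) (Bf : A →ₗ[K] A →ₗ[K] K) : Prop :=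
  (∀ x y, Bf x y = Bf y x) ∧ (∀ x, (∀ y, Bf x y = 0) → x = 0) ∧
  (∀ x y, Bf (α x) (α y) = Bf x y) ∧
  ∀ x y z, Bf (m x y) (α z) - Bf (α x) (m y z) = Bf (m y x) (α z) - Bf (α y) (m x z)

end Basic

section Transpose
variable {X Y : Type*} [AddCommGroup X] [Module K X] [AddCommGroup Y] [Module K Y]

/-- The transpose of linear maps, as a bundled linear map. -/
noncomputable def transposeH : (X →ₗ[K] Y) →ₗ[K] (Y →ₗ[K] K) →ₗ[K] (X →ₗ[K] K) :=
  (LinearMap.llcomp K X Y K).flip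

@[simp] theorem transposeH_apply (f : X →ₗ[K] Y) (ξ : Y →ₗ[K] K) (x : X) :
    transposeH f ξ x = ξ (f x) := rfl

end Transpose

section StarOps
variable {A : Type*} [AddCommGroup A] [Module K A]

/-- The evaluation map into the double dual. -/
noncomputable def evalH : A →ₗ[K] ((A →ₗ[K] K) →ₗ[K] K) :=
  (LinearMap.id : (A →ₗ[K] K) →ₗ[K] (A →ₗ[K] K)).flip

/-- The operator `L^⋆` : `⟨L^⋆_x ξ, y⟩ = -⟨ξ, α⁻¹(x) · α⁻²(y)⟩`. -/
noncomputable def Lstar (m : A →ₗ[K] A →ₗ[K] A) (α : A ≃ₗ[K] A) :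
    A →ₗ[K] (A →ₗ[K] K) →ₗ[K] (A →ₗ[K] K) :=
  -(transposeH ∘ₗ
      (LinearMap.lcomp K A ((α ^ (-2 : ℤ) : A ≃ₗ[K] A) : A →ₗ[K] A)) ∘ₗ m ∘ₗ
      ((α⁻¹ : A ≃ₗ[K] A) : A →ₗ[K] A))

/-- The operator `R^⋆` : `⟨R^⋆_x ξ, y⟩ = -⟨ξ, α⁻²(y) · α⁻¹(x)⟩`. -/
noncomputable def Rstar (m : A →ₗ[K] A →ₗ[K] A) (α : A ≃ₗ[K] A) :
    A →ₗ[K] (A →ₗ[K] K) →ₗ[K] (A →ₗ[K] K) :=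
  -(transposeH ∘ₗ
      (LinearMap.lcomp K A ((α ^ (-2 : ℤ) : A ≃ₗ[K] A) : A →ₗ[K] A)) ∘ₗ m.flip ∘ₗ
      ((α⁻¹ : A ≃ₗ[K] A) : A →ₗ[K] A))

/-- The operator `ad^⋆ = L^⋆ - R^⋆`. -/
noncomputable def adStar (m : A →ₗ[K] A →ₗ[K] A) (α : A ≃ₗ[K] A) :
    A →ₗ[K] (A →ₗ[K] K) →ₗ[K] (A →ₗ[K] K) :=
  Lstar m α - Rstar m α

variable [FiniteDimensional K A]

/-- The inverse of the double-dual evaluation isomorphism. -/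
noncomputable def evalInvH : ((A →ₗ[K] K) →ₗ[K] K) →ₗ[K] A :=
  (Module.evalEquiv K A).symm.toLinearMap

/-- The operator `ℒ^⋆` : `⟨η, ℒ^⋆_ξ x⟩ = -⟨(α⁻¹)*(ξ) ∘ η, α²(x)⟩`. -/
noncomputable def Lcurly
    (mc : (A →ₗ[K] K) →ₗ[K] (A →ₗ[K] K) →ₗ[K] (A →ₗ[K] K))
    (α : A ≃ₗ[K] A) : (A →ₗ[K] K) →ₗ[K] A →ₗ[K] A :=
  -((LinearMap.llcomp K A ((A →ₗ[K] K) →ₗ[K] K) A evalInvH) ∘ₗ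
      (LinearMap.lcomp K ((A →ₗ[K] K) →ₗ[K] K)
        (evalH ∘ₗ ((α ^ (2 : ℤ) : A ≃ₗ[K] A) : A →ₗ[K] A))) ∘ₗ
      transposeH ∘ₗ mc ∘ₗ
      (transposeH ((α⁻¹ : A ≃ₗ[K] A) : A →ₗ[K] A)))

/-- The operator `ℛ^⋆` : `⟨η, ℛ^⋆_ξ x⟩ = -⟨η ∘ (α⁻¹)*(ξ), α²(x)⟩`. -/
noncomputable def Rcurly
    (mc : (A →ₗ[K] K) →ₗ[K] (A →ₗ[K] K) →ₗ[K] (A →ₗ[K] K))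
    (α : A ≃ₗ[K] A) : (A →ₗ[K] K) →ₗ[K] A →ₗ[K] A :=
  -((LinearMap.llcomp K A ((A →ₗ[K] K) →ₗ[K] K) A evalInvH) ∘ₗ
      (LinearMap.lcomp K ((A →ₗ[K] K) →ₗ[K] K)
        (evalH ∘ₗ ((α ^ (2 : ℤ) : A ≃ₗ[K] A) : A →ₗ[K] A))) ∘ₗ
      transposeH ∘ₗ mc.flip ∘ₗ
      (transposeH ((α⁻¹ : A ≃ₗ[K] A) : A →ₗ[K] A)))

/-- The operator `𝔞𝔡^⋆ = ℒ^⋆ - ℛ^⋆`. -/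
noncomputable def adCurly
    (mc : (A →ₗ[K] K) →ₗ[K] (A →ₗ[K] K) →ₗ[K] (A →ₗ[K] K))
    (α : A ≃ₗ[K] A) : (A →ₗ[K] K) →ₗ[K] A →ₗ[K] A :=
  Lcurly mc α - Rcurly mc α

end StarOps

section Tensor
variable {A : Type*} [AddCommGroup A] [Module K A]

/-- The pairing of `ξ ⊗ η` with elements of `A ⊗ A`. -/
noncomputable def tpair (ξ η : A →ₗ[K] K) : (A ⊗[K] A) →ₗ[K] K :=
  (TensorProduct.lid K K).toLinearMap ∘ₗ TensorProduct.map ξ η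

/-- The pairing of `x ⊗ y` with elements of `A* ⊗ A*`. -/
noncomputable def dpair (x y : A) : ((A →ₗ[K] K) ⊗[K] (A →ₗ[K] K)) →ₗ[K] K :=
  (TensorProduct.lid K K).toLinearMap ∘ₗ TensorProduct.map (evalH x) (evalH y)

/-- Pairing the first two tensor components of `A ⊗ A ⊗ A` with `ξ` and `η`. -/
noncomputable def pair12 (ξ η : A →ₗ[K] K) : (A ⊗[K] (A ⊗[K] A)) →ₗ[K] A :=
  (TensorProduct.lid K A).toLinearMap ∘ₗ
    TensorProduct.map ξ ((TensorProduct.lid K A).toLinearMap ∘ₗ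
      TensorProduct.map η LinearMap.id)

/-- The map `r^♯ : A* → A` associated to `r ∈ A ⊗ A`, `⟨r^♯(ξ), η⟩ = ⟨r, ξ ⊗ η⟩`. -/
noncomputable def rSharpL (r : A ⊗[K] A) : (A →ₗ[K] K) →ₗ[K] A :=
  ((LinearMap.llcomp K (A ⊗[K] A) (K ⊗[K] A) A (TensorProduct.lid K A).toLinearMap) ∘ₗ
    (LinearMap.rTensorHom A)).flip r

/-- The bilinear operation producing `[[r,r]]` out of `r ⊗ r`. -/
noncomputable def homPreLieBB (m : A →ₗ[K] A →ₗ[K] A) (α : A →ₗ[K] A) :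
    ((A ⊗[K] A) ⊗[K] (A ⊗[K] A)) →ₗ[K] (A ⊗[K] (A ⊗[K] A)) :=
  (TensorProduct.assoc K A A A).toLinearMap ∘ₗ
      (TensorProduct.map (TensorProduct.map α α) (TensorProduct.lift m)) ∘ₗ
      (TensorProduct.tensorTensorTensorComm K A A A A).toLinearMap
    - (TensorProduct.map α (TensorProduct.map (TensorProduct.lift (m.flip - m)) α)) ∘ₗ
      (LinearMap.lTensor A ((TensorProduct.assoc K A A A).symm.toLinearMap)) ∘ₗ
      (TensorProduct.assoc K A A (A ⊗[K] A)).toLinearMap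
    - (TensorProduct.map (TensorProduct.lift m)
        ((TensorProduct.map α α) ∘ₗ (TensorProduct.comm K A A).toLinearMap)) ∘ₗ
      (TensorProduct.tensorTensorTensorComm K A A A A).toLinearMap

/-- The element `[[r,r]] ∈ A ⊗ A ⊗ A`. -/
noncomputable def bracket2 (m : A →ₗ[K] A →ₗ[K] A) (α : A →ₗ[K] A) (r : A ⊗[K] A) :
    A ⊗[K] (A ⊗[K] A) :=
  homPreLieBB m α (r ⊗ₜ[K] r)

/-- A Hom-s-matrix in a Hom-pre-Lie algebra. -/
def IsHomSMatrix {B : Type*} [AddCommGroup B] [Module K B]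
    (mB : B →ₗ[K] B →ₗ[K] B) (γ : B ≃ₗ[K] B) (r : B ⊗[K] B) : Prop :=
  (TensorProduct.comm K B B) r = r ∧
  (∀ ξ, rSharpL r (ξ ∘ₗ ((γ⁻¹ : B ≃ₗ[K] B) : B →ₗ[K] B)) = γ (rSharpL r ξ)) ∧
  bracket2 mB (γ : B →ₗ[K] B) r = 0

/-- The representation `x ↦ F(x) ⊗ c + c ⊗ G(x)` on `Y ⊗ Y`. -/
noncomputable def tensorRep {Y : Type*} [AddCommGroup Y] [Module K Y]
    (F G : A →ₗ[K] Y →ₗ[K] Y) (c : Y →ₗ[K] Y) :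
    A →ₗ[K] Module.End K (Y ⊗[K] Y) :=
  (LinearMap.mulRight K (LinearMap.lTensor Y c)) ∘ₗ (LinearMap.rTensorHom Y) ∘ₗ F
    + (LinearMap.mulLeft K (LinearMap.rTensor Y c)) ∘ₗ (LinearMap.lTensorHom Y) ∘ₗ G

/-- The dual map `ρ^⋆` : `⟨ρ^⋆(x)ξ, u⟩ = -⟨(β⁻²)*(ξ), ρ(α(x))u⟩`. -/
noncomputable def rhoStar {V : Type*} [AddCommGroup V] [Module K V]
    (α : A →ₗ[K] A) (β : V ≃ₗ[K] V) (ρ : A →ₗ[K] Module.End K V) :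
    A →ₗ[K] (V →ₗ[K] K) →ₗ[K] (V →ₗ[K] K) :=
  -(transposeH ∘ₗ
      (LinearMap.mulLeft K (((β ^ (-2 : ℤ) : V ≃ₗ[K] V) : V →ₗ[K] V) : Module.End K V)) ∘ₗ
      ρ ∘ₗ α)

/-- The semidirect product Hom-pre-Lie product on `A × W`. -/
noncomputable def sdProduct {W : Type*} [AddCommGroup W] [Module K W]
    (m : A →ₗ[K] A →ₗ[K] A) (l r : A →ₗ[K] W →ₗ[K] W) :
    (A × W) →ₗ[K] (A × W) →ₗ[K] (A × W) :=
  (m.compl₁₂ (LinearMap.fst K A W) (LinearMap.fst K A W)).compr₂ (LinearMap.inl K A W)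
    + ((l.compl₁₂ (LinearMap.fst K A W) (LinearMap.snd K A W))
        + (r.compl₁₂ (LinearMap.fst K A W) (LinearMap.snd K A W)).flip).compr₂
      (LinearMap.inr K A W)

end Tensor

section Std
variable (K)
variable (A : Type*) [AddCommGroup A] [Module K A]

/-- The standard bilinear form `ω̄(x+ξ, y+η) = ⟨ξ,y⟩ - ⟨η,x⟩` on `A × A*`. -/
noncomputable def stdOmega :
    (A × (A →ₗ[K] K)) →ₗ[K] (A × (A →ₗ[K] K)) →ₗ[K] K :=
  (LinearMap.id : (A →ₗ[K] K) →ₗ[K] (A →ₗ[K] K)).compl₁₂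
      (LinearMap.snd K A (A →ₗ[K] K)) (LinearMap.fst K A (A →ₗ[K] K))
    - ((LinearMap.id : (A →ₗ[K] K) →ₗ[K] (A →ₗ[K] K)).compl₁₂
      (LinearMap.snd K A (A →ₗ[K] K)) (LinearMap.fst K A (A →ₗ[K] K))).flip

variable {K A}

/-- The standard product `⋄` on `A × A*`:
`(x+ξ) ⋄ (y+η) = x·y + 𝔞𝔡^⋆_ξ y - ℛ^⋆_η x + ξ∘η + ad^⋆_x η - R^⋆_y ξ`. -/
noncomputable def stdDiamond [FiniteDimensional K A]
    (m : A →ₗ[K] A →ₗ[K] A) (α : A ≃ₗ[K] A)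
    (mc : (A →ₗ[K] K) →ₗ[K] (A →ₗ[K] K) →ₗ[K] (A →ₗ[K] K)) :
    (A × (A →ₗ[K] K)) →ₗ[K] (A × (A →ₗ[K] K)) →ₗ[K] (A × (A →ₗ[K] K)) :=
  (m.compl₁₂ (LinearMap.fst K A (A →ₗ[K] K)) (LinearMap.fst K A (A →ₗ[K] K))
      + (adCurly mc α).compl₁₂ (LinearMap.snd K A (A →ₗ[K] K)) (LinearMap.fst K A (A →ₗ[K] K))
      - ((Rcurly mc α).compl₁₂ (LinearMap.snd K A (A →ₗ[K] K))
          (LinearMap.fst K A (A →ₗ[K] K))).flip).compr₂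
      (LinearMap.inl K A (A →ₗ[K] K))
    + (mc.compl₁₂ (LinearMap.snd K A (A →ₗ[K] K)) (LinearMap.snd K A (A →ₗ[K] K))
      + (adStar m α).compl₁₂ (LinearMap.fst K A (A →ₗ[K] K)) (LinearMap.snd K A (A →ₗ[K] K))
      - ((Rstar m α).compl₁₂ (LinearMap.fst K A (A →ₗ[K] K))
          (LinearMap.snd K A (A →ₗ[K] K))).flip).compr₂
      (LinearMap.inr K A (A →ₗ[K] K))

end Std

section Bialg
variable {A : Type*} [AddCommGroup A] [Module K A]

/-- A Hom-pre-Lie bialgebra: the two 1-cocycle conditions on the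
comultiplications `φ*` and `ψ*`. -/
def IsHomPreLieBialgebra (m : A →ₗ[K] A →ₗ[K] A) (α : A ≃ₗ[K] A)
    (mc : (A →ₗ[K] K) →ₗ[K] (A →ₗ[K] K) →ₗ[K] (A →ₗ[K] K))
    (φs : A →ₗ[K] A ⊗[K] A)
    (ψs : (A →ₗ[K] K) →ₗ[K] (A →ₗ[K] K) ⊗[K] (A →ₗ[K] K)) : Prop :=
  IsHomLieCocycle (m - m.flip) (α : A →ₗ[K] A)
    (tensorRep (m ∘ₗ ((α ^ (-2 : ℤ) : A ≃ₗ[K] A) : A →ₗ[K] A))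
      ((m - m.flip) ∘ₗ ((α ^ (-2 : ℤ) : A ≃ₗ[K] A) : A →ₗ[K] A))
      (α : A →ₗ[K] A)) φs ∧
  IsHomLieCocycle (mc - mc.flip) (transposeH ((α⁻¹ : A ≃ₗ[K] A) : A →ₗ[K] A))
    (tensorRep (mc ∘ₗ transposeH ((α ^ (2 : ℤ) : A ≃ₗ[K] A) : A →ₗ[K] A))
      ((mc - mc.flip) ∘ₗ transposeH ((α ^ (2 : ℤ) : A ≃ₗ[K] A) : A →ₗ[K] A))
      (transposeH ((α⁻¹ : A ≃ₗ[K] A) : A →ₗ[K] A))) ψs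

end Bialg

end Defs

section MyAux

attribute [local instance] dualAddCommGroupH

variable {K : Type*} [Field K]

section Ops
variable {A : Type*} [AddCommGroup A] [Module K A]

private lemma my_zpowm2 (α : A ≃ₗ[K] A) : (α ^ (-2 : ℤ) : A ≃ₗ[K] A) = α⁻¹ * α⁻¹ := by group

private lemma my_zpow2 (α : A ≃ₗ[K] A) : (α ^ (2 : ℤ) : A ≃ₗ[K] A) = α * α := by
  rw [show ((2:ℤ)) = ((2:ℕ):ℤ) by norm_num, zpow_natCast, pow_two]

private lemma my_Lstar_apply (m : A →ₗ[K] A →ₗ[K] A) (α : A ≃ₗ[K] A) (x : A) (ξ : A →ₗ[K] K) (y : A) :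
    Lstar m α x ξ y = -ξ (m (α.symm x) (α.symm (α.symm y))) := by
  simp [Lstar, my_zpowm2]; rfl

private lemma my_Rstar_apply (m : A →ₗ[K] A →ₗ[K] A) (α : A ≃ₗ[K] A) (x : A) (ξ : A →ₗ[K] K) (y : A) :
    Rstar m α x ξ y = -ξ (m (α.symm (α.symm y)) (α.symm x)) := by
  simp [Rstar, my_zpowm2]; rfl

private lemma my_adStar_apply (m : A →ₗ[K] A →ₗ[K] A) (α : A ≃ₗ[K] A) (x : A) (ξ : A →ₗ[K] K) (y : A) :
    adStar m α x ξ y = Lstar m α x ξ y - Rstar m α x ξ y := rfl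

variable [FiniteDimensional K A]

private lemma my_evalInvH_pair (φ : (A →ₗ[K] K) →ₗ[K] K) (η : A →ₗ[K] K) :
    η (evalInvH (K := K) (A := A) φ) = φ η := by
  have := (Module.evalEquiv K A).apply_symm_apply φ
  have h2 := congrArg (fun g => g η) this
  simpa [evalInvH, Module.evalEquiv_toLinearMap] using h2

private lemma my_Rcurly_pair (mc : (A →ₗ[K] K) →ₗ[K] (A →ₗ[K] K) →ₗ[K] (A →ₗ[K] K))
    (α : A ≃ₗ[K] A) (ξ η : A →ₗ[K] K) (x : A) :
    η (Rcurly mc α ξ x) = -(mc η (ξ ∘ₗ (α.symm : A →ₗ[K] A))) (α (α x)) := by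
  simp [Rcurly, my_zpow2, my_evalInvH_pair, evalH, transposeH]; rfl

private lemma my_Lcurly_pair (mc : (A →ₗ[K] K) →ₗ[K] (A →ₗ[K] K) →ₗ[K] (A →ₗ[K] K))
    (α : A ≃ₗ[K] A) (ξ η : A →ₗ[K] K) (x : A) :
    η (Lcurly mc α ξ x) = -(mc (ξ ∘ₗ (α.symm : A →ₗ[K] A)) η) (α (α x)) := by
  simp [Lcurly, my_zpow2, my_evalInvH_pair, evalH, transposeH]; rfl

private lemma my_stdOmega_apply (X Y : A × (A →ₗ[K] K)) :
    stdOmega K A X Y = X.2 Y.1 - Y.2 X.1 := rfl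

private lemma my_stdDiamond_apply (m : A →ₗ[K] A →ₗ[K] A) (α : A ≃ₗ[K] A)
    (mc : (A →ₗ[K] K) →ₗ[K] (A →ₗ[K] K) →ₗ[K] (A →ₗ[K] K))
    (X Y : A × (A →ₗ[K] K)) :
    stdDiamond m α mc X Y =
      (m X.1 Y.1 + adCurly mc α X.2 Y.1 - Rcurly mc α Y.2 X.1,
       mc X.2 Y.2 + adStar m α X.1 Y.2 - Rstar m α Y.1 X.2) := by
  simp [stdDiamond]

end Ops

section Restr
variable {M : Type*} [AddCommGroup M] [Module K M]

/-- Restriction of a bilinear map to a closed submodule. -/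
private noncomputable def resBil (m : M →ₗ[K] M →ₗ[K] M) (p : Submodule K M)
    (hp : ∀ x ∈ p, ∀ y ∈ p, m x y ∈ p) : p →ₗ[K] p →ₗ[K] p :=
  LinearMap.mk₂ K (fun x y => ⟨m x y, hp x x.2 y y.2⟩)
    (fun x x' y => Subtype.ext (by simp))
    (fun c x y => Subtype.ext (by simp))
    (fun x y y' => Subtype.ext (by simp))
    (fun c x y => Subtype.ext (by simp))

@[simp] private lemma resBil_coe (m : M →ₗ[K] M →ₗ[K] M) (p : Submodule K M)
    (hp : ∀ x ∈ p, ∀ y ∈ p, m x y ∈ p) (x y : p) :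
    (resBil m p hp x y : M) = m x y := rfl

private lemma isHomPreLie_of_equiv {N : Type*} [AddCommGroup N] [Module K N]
    (e : M ≃ₗ[K] N) (m : M →ₗ[K] M →ₗ[K] M) (αl : M →ₗ[K] M)
    (m' : N →ₗ[K] N →ₗ[K] N) (α' : N →ₗ[K] N)
    (hm : ∀ x y, e (m x y) = m' (e x) (e y)) (hα : ∀ x, e (αl x) = α' (e x))
    (h : IsHomPreLie m αl) : IsHomPreLie m' α' := by
  have hsur : ∀ b : N, ∃ a : M, e a = b := fun b => ⟨e.symm b, e.apply_symm_apply b⟩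
  constructor
  · intro x y
    obtain ⟨a, rfl⟩ := hsur x; obtain ⟨b, rfl⟩ := hsur y
    have := congrArg e (h.1 a b)
    simp only [hm, hα] at this
    exact this
  · intro x y z
    obtain ⟨a, rfl⟩ := hsur x; obtain ⟨b, rfl⟩ := hsur y; obtain ⟨c, rfl⟩ := hsur z
    have := congrArg e (h.2 a b c)
    simp only [map_sub, hm, hα] at this
    exact this

private lemma maninTriple_of_equiv {N : Type*} [AddCommGroup N] [Module K N]
    (e : M ≃ₗ[K] N) (m : M →ₗ[K] M →ₗ[K] M) (αl : M →ₗ[K] M) (ω : M →ₗ[K] M →ₗ[K] K)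
    (A1 A2 : Submodule K M)
    (m' : N →ₗ[K] N →ₗ[K] N) (α' : N →ₗ[K] N) (ω' : N →ₗ[K] N →ₗ[K] K)
    (B1 B2 : Submodule K N)
    (hm : ∀ x y, e (m x y) = m' (e x) (e y)) (hα : ∀ x, e (αl x) = α' (e x))
    (hω : ∀ x y, ω x y = ω' (e x) (e y))
    (hB1 : Submodule.map (e : M →ₗ[K] N) A1 = B1)
    (hB2 : Submodule.map (e : M →ₗ[K] N) A2 = B2)
    (h : IsManinTriple m αl ω A1 A2) : IsManinTriple m' α' ω' B1 B2 := by
  obtain ⟨⟨hpl, hsk, hnd, hinv, hcomp⟩, h11, hα1, h22, hα2, hi1, hi2, hcpl⟩ := h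
  have hsur : ∀ b : N, ∃ a : M, e a = b := fun b => ⟨e.symm b, e.apply_symm_apply b⟩
  subst hB1; subst hB2
  refine ⟨⟨isHomPreLie_of_equiv e m αl m' α' hm hα hpl, ?_, ?_, ?_, ?_⟩, ?_, ?_, ?_, ?_, ?_, ?_, ?_⟩
  · intro x y
    obtain ⟨a, rfl⟩ := hsur x; obtain ⟨b, rfl⟩ := hsur y
    rw [← hω, ← hω]; exact hsk a b
  · intro x hx
    obtain ⟨a, rfl⟩ := hsur x
    have ha : a = 0 := hnd a (fun y => by rw [hω]; exact hx (e y))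
    rw [ha, map_zero]
  · intro x y
    obtain ⟨a, rfl⟩ := hsur x; obtain ⟨b, rfl⟩ := hsur y
    rw [← hα, ← hα, ← hω, ← hω]; exact hinv a b
  · intro x y z
    obtain ⟨a, rfl⟩ := hsur x; obtain ⟨b, rfl⟩ := hsur y; obtain ⟨c, rfl⟩ := hsur z
    rw [← hm a b, ← hm a c, ← hm c a, ← hα c, ← hα b, ← map_sub, ← hω, ← hω]
    exact hcomp a b c
  · rintro x ⟨a, ha, rfl⟩ y ⟨b, hb, rfl⟩
    exact ⟨m a b, h11 a ha b hb, by simp only [LinearEquiv.coe_coe]; exact hm a b⟩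
  · rintro x ⟨a, ha, rfl⟩
    exact ⟨αl a, hα1 a ha, by simp only [LinearEquiv.coe_coe]; exact hα a⟩
  · rintro x ⟨a, ha, rfl⟩ y ⟨b, hb, rfl⟩
    exact ⟨m a b, h22 a ha b hb, by simp only [LinearEquiv.coe_coe]; exact hm a b⟩
  · rintro x ⟨a, ha, rfl⟩
    exact ⟨αl a, hα2 a ha, by simp only [LinearEquiv.coe_coe]; exact hα a⟩
  · rintro x ⟨a, ha, rfl⟩ y ⟨b, hb, rfl⟩
    simp only [LinearEquiv.coe_coe]
    rw [← hω]; exact hi1 a ha b hb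
  · rintro x ⟨a, ha, rfl⟩ y ⟨b, hb, rfl⟩
    simp only [LinearEquiv.coe_coe]
    rw [← hω]; exact hi2 a ha b hb
  · constructor
    · rw [disjoint_iff, ← Submodule.map_inf (e : M →ₗ[K] N) e.injective,
        disjoint_iff.mp hcpl.1, Submodule.map_bot]
    · rw [codisjoint_iff, ← Submodule.map_sup, codisjoint_iff.mp hcpl.2,
        Submodule.map_top, LinearEquiv.range]

end Restr

end MyAux

universe u v

set_option maxHeartbeats 1600000 in
theorem stmt_2 {K : Type*} [Field K] {M : Type*} [AddCommGroup M] [Module K M]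
    [FiniteDimensional K M]
    (m : M →ₗ[K] M →ₗ[K] M) (α : M ≃ₗ[K] M) (ω : M →ₗ[K] M →ₗ[K] K)
    (A1 A2 : Submodule K M)
    (h : IsManinTriple m (α : M →ₗ[K] M) ω A1 A2) :
    ∃ (m₁ : A1 →ₗ[K] A1 →ₗ[K] A1) (α₁ : A1 ≃ₗ[K] A1)
      (mc : (A1 →ₗ[K] K) →ₗ[K] (A1 →ₗ[K] K) →ₗ[K] (A1 →ₗ[K] K))
      (f : M ≃ₗ[K] A1 × (A1 →ₗ[K] K)),
      (∀ x y : A1, (m₁ x y : M) = m x y) ∧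
      (∀ x : A1, (α₁ x : M) = α x) ∧
      IsHomPreLie mc (transposeH ((α₁⁻¹ : A1 ≃ₗ[K] A1) : A1 →ₗ[K] A1)) ∧
      IsManinTriple (stdDiamond m₁ α₁ mc)
        (LinearMap.prodMap (α₁ : A1 →ₗ[K] A1) (transposeH ((α₁⁻¹ : A1 ≃ₗ[K] A1) : A1 →ₗ[K] A1)))
        (stdOmega K A1)
        (LinearMap.range (LinearMap.inl K A1 (A1 →ₗ[K] K)))
        (LinearMap.range (LinearMap.inr K A1 (A1 →ₗ[K] K))) ∧
      (∀ X Y : M, f (m X Y) = stdDiamond m₁ α₁ mc (f X) (f Y)) ∧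
      (∀ X : M, f (α X) =
        LinearMap.prodMap (α₁ : A1 →ₗ[K] A1) (transposeH ((α₁⁻¹ : A1 ≃ₗ[K] A1) : A1 →ₗ[K] A1)) (f X)) ∧
      Submodule.map (f : M →ₗ[K] A1 × (A1 →ₗ[K] K)) A1
        = LinearMap.range (LinearMap.inl K A1 (A1 →ₗ[K] K)) ∧
      Submodule.map (f : M →ₗ[K] A1 × (A1 →ₗ[K] K)) A2
        = LinearMap.range (LinearMap.inr K A1 (A1 →ₗ[K] K)) ∧
      (∀ X Y : M, ω X Y = stdOmega K A1 (f X) (f Y)) ∧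
      ∀ (x : A1) (u : A2), f ((x : M) + (u : M)) = (x, (ω (u : M)).domRestrict A1) := by
  classical
  obtain ⟨⟨hpl, hsk, hnd, hinvc, hcompc⟩, h11, hα1c, h22, hα2c, hi1, hi2, hcpl⟩ := id h
  simp only [LinearEquiv.coe_coe] at hpl hinvc hcompc hα1c hα2c
  have hαm : ∀ a b, α (m a b) = m (α a) (α b) := hpl.1
  have hsm : ∀ a b, α.symm (m a b) = m (α.symm a) (α.symm b) := by
    intro a b
    apply α.injective
    rw [hαm, α.apply_symm_apply, α.apply_symm_apply, α.apply_symm_apply]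
  have hinv' : ∀ a b, ω (α a) b = ω a (α.symm b) := by
    intro a b
    have := hinvc a (α.symm b)
    rwa [α.apply_symm_apply] at this
  have hc' : ∀ a b c, ω (m a b) c = ω (α b) (m (α.symm c) a) - ω (α b) (m a (α.symm c)) := by
    intro a b c
    have hx := hcompc a b (α.symm c)
    rw [α.apply_symm_apply, map_sub] at hx
    rw [hx]; ring
  -- pure consequences of the quadratic structure
  have Fb2 : ∀ x v y : M, ω (m x v) y
      = ω v (m (α.symm (α.symm y)) (α.symm x)) - ω v (m (α.symm x) (α.symm (α.symm y))) := by
    intro x v y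
    rw [hc' x v y, hinv', hinv', hsm, hsm]
  have Fb1 : ∀ x v w : M, ω w (m x v) = ω (m w (α v)) (α (α x)) := by
    intro x v w
    rw [hsk w (m x v), hc' x v w, hc' w (α v) (α (α x))]
    simp only [LinearEquiv.symm_apply_apply, hinv', hsm]
    try ring
  have h1c : ∀ u y w : M, ω (m w (α u)) (α (α y)) = ω w (m y u) := by
    intro u y w
    rw [hsk w (m y u), hc' w (α u) (α (α y)), hc' y u w]
    simp only [LinearEquiv.symm_apply_apply, hinv', hsm]
    try ring
  have h2c : ∀ u y w : M, ω (m (α u) w) (α (α y)) = ω w (m y u) - ω w (m u y) := by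
    intro u y w
    rw [hc' (α u) w (α (α y))]
    simp only [LinearEquiv.symm_apply_apply, hinv', hsm]
    try ring
  have Fc1 : ∀ u y w : M, ω w (m u y)
      = ω (m w (α u)) (α (α y)) - ω (m (α u) w) (α (α y)) := by
    intro u y w; rw [h1c, h2c]; ring
  have Fc2 : ∀ u y z : M, ω (m u y) z = ω (α u) (m (α.symm z) y) := by
    intro u y z
    rw [hsk (α u) (m (α.symm z) y), hc' u y z, hc' (α.symm z) y (α u)]
    simp only [LinearEquiv.symm_apply_apply, hinv', hsm]
    try ring
  -- decomposition of M
  have hdec : ∀ z : M, ∃ (x : A1) (u : A2), z = (x : M) + (u : M) := by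
    intro z
    have hz : z ∈ A1 ⊔ A2 := by rw [codisjoint_iff.mp hcpl.2]; trivial
    obtain ⟨a, ha, b, hb, hab⟩ := Submodule.mem_sup.mp hz
    exact ⟨⟨a, ha⟩, ⟨b, hb⟩, hab.symm⟩
  -- the pairing A2 ≃ A1*
  set Φlin : A2 →ₗ[K] (A1 →ₗ[K] K) :=
    (LinearMap.lcomp K K A1.subtype) ∘ₗ (ω ∘ₗ A2.subtype) with hΦdef
  have hΦapp : ∀ (u : A2) (y : A1), Φlin u y = ω (u : M) (y : M) := fun _ _ => rfl
  have hΦinj : Function.Injective Φlin := by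
    rw [← LinearMap.ker_eq_bot]
    rw [Submodule.eq_bot_iff]
    intro u hu
    rw [LinearMap.mem_ker] at hu
    have hu0 : (u : M) = 0 := by
      apply hnd
      intro z
      obtain ⟨a, b, rfl⟩ := hdec z
      rw [map_add]
      have h1 : ω (u : M) (a : M) = 0 := by
        have := congrArg (fun g => g a) hu
        simpa [hΦapp] using this
      rw [h1, hi2 u u.2 b b.2, add_zero]
    simpa using hu0
  have hΨinj : Function.Injective
      ((LinearMap.lcomp K K A2.subtype) ∘ₗ (ω ∘ₗ A1.subtype) : A1 →ₗ[K] (A2 →ₗ[K] K)) := by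
    rw [← LinearMap.ker_eq_bot, Submodule.eq_bot_iff]
    intro x hx
    rw [LinearMap.mem_ker] at hx
    have hx0 : (x : M) = 0 := by
      apply hnd
      intro z
      obtain ⟨a, b, rfl⟩ := hdec z
      rw [map_add]
      have h1 : ω (x : M) (b : M) = 0 := by
        have := congrArg (fun g => g b) hx
        simpa using this
      rw [h1, hi1 x x.2 a a.2, zero_add]
    simpa using hx0
  have hdual1 : Module.finrank K (A1 →ₗ[K] K) = Module.finrank K A1 :=
    Subspace.dual_finrank_eq
  have hdual2 : Module.finrank K (A2 →ₗ[K] K) = Module.finrank K A2 :=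
    Subspace.dual_finrank_eq
  have hd12 : Module.finrank K A2 = Module.finrank K (A1 →ₗ[K] K) := by
    have t1 := LinearMap.finrank_le_finrank_of_injective hΦinj
    have t2 := LinearMap.finrank_le_finrank_of_injective hΨinj
    omega
  have hΦbij : Function.Bijective Φlin := by
    refine ⟨hΦinj, ?_⟩
    rw [← LinearMap.injective_iff_surjective_of_finrank_eq_finrank hd12]
    exact hΦinj
  set Φe : A2 ≃ₗ[K] (A1 →ₗ[K] K) := LinearEquiv.ofBijective Φlin hΦbij with hΦedef
  have hΦecoe : ∀ u : A2, Φe u = Φlin u := fun _ => rfl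
  -- α restricted to A1
  set αr : A1 →ₗ[K] A1 := (α : M →ₗ[K] M).restrict hα1c with hαrdef
  have hαrcoe : ∀ x : A1, (αr x : M) = α (x : M) := fun _ => rfl
  have hαrinj : Function.Injective αr := by
    intro a b hab
    have h0 : ((αr a : A1) : M) = ((αr b : A1) : M) := congrArg Subtype.val hab
    rw [hαrcoe, hαrcoe] at h0
    exact Subtype.ext (α.injective h0)
  set α₁e : A1 ≃ₗ[K] A1 :=
    LinearEquiv.ofBijective αr ⟨hαrinj, (LinearMap.injective_iff_surjective).mp hαrinj⟩
    with hα₁def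
  have hα₁coe : ∀ x : A1, (α₁e x : M) = α (x : M) := fun _ => rfl
  have hα₁scoe : ∀ x : A1, ((α₁e.symm x : A1) : M) = α.symm (x : M) := by
    intro x
    apply α.injective
    rw [α.apply_symm_apply]
    have h0 := hα₁coe (α₁e.symm x)
    rw [α₁e.apply_symm_apply] at h0
    exact h0.symm
  -- restricted products
  set m₁ : A1 →ₗ[K] A1 →ₗ[K] A1 := resBil m A1 h11 with hm₁def
  set m₂ : A2 →ₗ[K] A2 →ₗ[K] A2 := resBil m A2 h22 with hm₂def
  set mc : (A1 →ₗ[K] K) →ₗ[K] (A1 →ₗ[K] K) →ₗ[K] (A1 →ₗ[K] K) :=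
    (m₂.compl₁₂ (Φe.symm : (A1 →ₗ[K] K) →ₗ[K] A2) (Φe.symm : (A1 →ₗ[K] K) →ₗ[K] A2)).compr₂
      (Φe : A2 →ₗ[K] (A1 →ₗ[K] K)) with hmcdef
  have hmc : ∀ ξ η, mc ξ η = Φe (m₂ (Φe.symm ξ) (Φe.symm η)) := fun _ _ => rfl
  have hmc' : ∀ u v : A2, mc (Φe u) (Φe v) = Φe (m₂ u v) := by
    intro u v; rw [hmc, Φe.symm_apply_apply, Φe.symm_apply_apply]
  -- α restricted to A2 and its Φ-compatibility
  set α₂r : A2 →ₗ[K] A2 := (α : M →ₗ[K] M).restrict hα2c with hα₂def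
  have hα₂coe : ∀ u : A2, (α₂r u : M) = α (u : M) := fun _ => rfl
  have hΦα : ∀ u : A2, Φe (α₂r u) = (Φe u) ∘ₗ (α₁e.symm : A1 →ₗ[K] A1) := by
    intro u
    apply LinearMap.ext
    intro y
    have hl : Φe (α₂r u) y = ω (α (u : M)) (y : M) := rfl
    have hr : ((Φe u) ∘ₗ (α₁e.symm : A1 →ₗ[K] A1)) y = ω (u : M) ((α₁e.symm y : A1) : M) := rfl
    rw [hl, hr, hα₁scoe, hinv']
  -- the isomorphism f
  set e0 : M ≃ₗ[K] (A1 × A2) := (Submodule.prodEquivOfIsCompl A1 A2 hcpl).symm with he0def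
  set f : M ≃ₗ[K] A1 × (A1 →ₗ[K] K) := e0.trans ((LinearEquiv.refl K A1).prodCongr Φe) with hfdef
  have hfadd : ∀ (x : A1) (u : A2), f ((x : M) + (u : M)) = (x, Φlin u) := by
    intro x u
    have h0 : (Submodule.prodEquivOfIsCompl A1 A2 hcpl) (x, u) = (x : M) + (u : M) := rfl
    have h1 : e0 ((x : M) + (u : M)) = (x, u) := by
      rw [he0def, ← h0]
      exact (Submodule.prodEquivOfIsCompl A1 A2 hcpl).symm_apply_apply _
    show ((LinearEquiv.refl K A1).prodCongr Φe) (e0 ((x : M) + (u : M))) = (x, Φlin u)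
    rw [h1]
    rfl
  have hfx : ∀ x : A1, f (x : M) = (x, 0) := by
    intro x
    have h0 := hfadd x 0
    simpa using h0
  have hfu : ∀ u : A2, f (u : M) = (0, Φlin u) := by
    intro u
    have h0 := hfadd 0 u
    simpa using h0
  have hfinv : ∀ (a : A1) (ξ : A1 →ₗ[K] K) (z : M),
      z = (a : M) + ((Φe.symm ξ : A2) : M) → f z = (a, ξ) := by
    intro a ξ z hz
    rw [hz, hfadd]
    have : Φlin (Φe.symm ξ) = ξ := Φe.apply_symm_apply ξ
    rw [this]
  -- nondegeneracy on the A1 side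
  have ndA1 : ∀ c : M, c ∈ A1 → (∀ w : A2, ω (w : M) c = 0) → c = 0 := by
    intro c hcA hw
    apply hnd
    intro z
    obtain ⟨a, b, rfl⟩ := hdec z
    rw [map_add, hi1 c hcA a a.2, hsk c (b : M), hw b]
    ring
  -- the four multiplication cases
  have case11 : ∀ (x y : A1), f (m (x : M) (y : M)) = (m₁ x y, 0) := by
    intro x y
    have h0 : m (x : M) (y : M) = ((m₁ x y : A1) : M) + ((0 : A2) : M) := by
      simp [hm₁def]
    rw [h0, hfadd]
    simp
  have case22 : ∀ (u v : A2), f (m (u : M) (v : M)) = (0, mc (Φlin u) (Φlin v)) := by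
    intro u v
    have h0 : m (u : M) (v : M) = (((0 : A1) : A1) : M) + ((m₂ u v : A2) : M) := by
      simp [hm₂def]
    rw [h0, hfadd]
    rw [show mc (Φlin u) (Φlin v) = Φlin (m₂ u v) from hmc' u v]
  have case12 : ∀ (x : A1) (v : A2),
      f (m (x : M) (v : M)) = (-(Rcurly mc α₁e (Φlin v) x), adStar m₁ α₁e x (Φlin v)) := by
    intro x v
    obtain ⟨p, q, hpq⟩ := hdec (m (x : M) (v : M))
    have hΦαv : (Φlin v) ∘ₗ (α₁e.symm : A1 →ₗ[K] A1) = Φe (α₂r v) := (hΦα v).symm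
    have hq : Φlin q = adStar m₁ α₁e x (Φlin v) := by
      apply LinearMap.ext
      intro z
      have h0 : ω (m (x : M) (v : M)) (z : M) = ω (p : M) (z : M) + ω (q : M) (z : M) := by
        rw [hpq, map_add, LinearMap.add_apply]
      rw [hi1 p p.2 z z.2, zero_add] at h0
      have hr : adStar m₁ α₁e x (Φlin v) z
          = -(ω (v : M) (m (α.symm (x : M)) (α.symm (α.symm (z : M)))))
            + ω (v : M) (m (α.symm (α.symm (z : M))) (α.symm (x : M))) := by
        simp only [my_adStar_apply, my_Lstar_apply, my_Rstar_apply, hΦapp,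
          hm₁def, resBil_coe, hα₁scoe]
        ring
      rw [hΦapp, ← h0, Fb2, hr]
      ring
    have hp : (p : M) = ((-(Rcurly mc α₁e (Φlin v) x) : A1) : M) := by
      have hdz : ((p : M) - ((-(Rcurly mc α₁e (Φlin v) x) : A1) : M)) = 0 := by
        apply ndA1 _ (Submodule.sub_mem _ p.2 (SetLike.coe_mem _))
        intro w
        rw [map_sub]
        have hwp : ω (w : M) (p : M) = ω (w : M) (m (x : M) (v : M)) := by
          have h1 : ω (w : M) (m (x : M) (v : M)) = ω (w : M) (p : M) + ω (w : M) (q : M) := by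
            rw [hpq, map_add]
          rw [hi2 w w.2 q q.2, add_zero] at h1
          exact h1.symm
        have hwr : ω (w : M) ((Rcurly mc α₁e (Φlin v) x : A1) : M)
            = -(ω (m (w : M) (α (v : M))) (α (α (x : M)))) := by
          have h1 : ω (w : M) ((Rcurly mc α₁e (Φlin v) x : A1) : M)
              = Φlin w (Rcurly mc α₁e (Φlin v) x) := (hΦapp w _).symm
          rw [h1, my_Rcurly_pair, hΦαv, show Φlin w = Φe w from rfl, hmc' w (α₂r v)]
          rfl
        have hcoe : ((-(Rcurly mc α₁e (Φlin v) x) : A1) : M)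
            = -((Rcurly mc α₁e (Φlin v) x : A1) : M) := rfl
        rw [hcoe, map_neg, hwp, hwr, Fb1 (x : M) (v : M) (w : M)]
        ring
      have := sub_eq_zero.mp hdz
      exact this
    have hq2 : q = Φe.symm (adStar m₁ α₁e x (Φlin v)) := by
      rw [LinearEquiv.eq_symm_apply]
      exact hq
    apply hfinv
    rw [hpq, hp, hq2]
  have case21 : ∀ (u : A2) (y : A1),
      f (m (u : M) (y : M)) = (adCurly mc α₁e (Φlin u) y, -(Rstar m₁ α₁e y (Φlin u))) := by
    intro u y
    obtain ⟨p, q, hpq⟩ := hdec (m (u : M) (y : M))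
    have hΦαu : (Φlin u) ∘ₗ (α₁e.symm : A1 →ₗ[K] A1) = Φe (α₂r u) := (hΦα u).symm
    have hq : Φlin q = -(Rstar m₁ α₁e y (Φlin u)) := by
      apply LinearMap.ext
      intro z
      have h0 : ω (m (u : M) (y : M)) (z : M) = ω (p : M) (z : M) + ω (q : M) (z : M) := by
        rw [hpq, map_add, LinearMap.add_apply]
      rw [hi1 p p.2 z z.2, zero_add] at h0
      have hr : (-(Rstar m₁ α₁e y (Φlin u)) : (A1 →ₗ[K] K)) z
          = ω (u : M) (m (α.symm (α.symm (z : M))) (α.symm (y : M))) := by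
        simp only [LinearMap.neg_apply, my_Rstar_apply, hΦapp, hm₁def, resBil_coe, hα₁scoe]
        ring
      rw [hΦapp, ← h0, Fc2, hr, hinv', hsm]
    have hp : (p : M) = ((adCurly mc α₁e (Φlin u) y : A1) : M) := by
      have hdz : ((p : M) - ((adCurly mc α₁e (Φlin u) y : A1) : M)) = 0 := by
        apply ndA1 _ (Submodule.sub_mem _ p.2 (SetLike.coe_mem _))
        intro w
        rw [map_sub]
        have hwp : ω (w : M) (p : M) = ω (w : M) (m (u : M) (y : M)) := by
          have h1 : ω (w : M) (m (u : M) (y : M)) = ω (w : M) (p : M) + ω (w : M) (q : M) := by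
            rw [hpq, map_add]
          rw [hi2 w w.2 q q.2, add_zero] at h1
          exact h1.symm
        have hwl : ω (w : M) ((Lcurly mc α₁e (Φlin u) y : A1) : M)
            = -(ω (m (α (u : M)) (w : M)) (α (α (y : M)))) := by
          have h1 : ω (w : M) ((Lcurly mc α₁e (Φlin u) y : A1) : M)
              = Φlin w (Lcurly mc α₁e (Φlin u) y) := (hΦapp w _).symm
          rw [h1, my_Lcurly_pair, hΦαu, show Φlin w = Φe w from rfl, hmc' (α₂r u) w]
          rfl
        have hwr : ω (w : M) ((Rcurly mc α₁e (Φlin u) y : A1) : M)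
            = -(ω (m (w : M) (α (u : M))) (α (α (y : M)))) := by
          have h1 : ω (w : M) ((Rcurly mc α₁e (Φlin u) y : A1) : M)
              = Φlin w (Rcurly mc α₁e (Φlin u) y) := (hΦapp w _).symm
          rw [h1, my_Rcurly_pair, hΦαu, show Φlin w = Φe w from rfl, hmc' w (α₂r u)]
          rfl
        have hcoe : ((adCurly mc α₁e (Φlin u) y : A1) : M)
            = ((Lcurly mc α₁e (Φlin u) y : A1) : M) - ((Rcurly mc α₁e (Φlin u) y : A1) : M) := rfl
        rw [hcoe, hwp, map_sub, hwl, hwr, Fc1 (u : M) (y : M) (w : M)]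
        ring
      have := sub_eq_zero.mp hdz
      exact this
    have hq2 : q = Φe.symm (-(Rstar m₁ α₁e y (Φlin u))) := by
      rw [LinearEquiv.eq_symm_apply]
      exact hq
    apply hfinv
    rw [hpq, hp, hq2]
  -- multiplicativity of f
  have P1 : ∀ X Y : M, f (m X Y) = stdDiamond m₁ α₁e mc (f X) (f Y) := by
    intro X Y
    obtain ⟨x, u, rfl⟩ := hdec X
    obtain ⟨y, v, rfl⟩ := hdec Y
    have e1 : m ((x : M) + (u : M)) ((y : M) + (v : M))
        = m (x : M) (y : M) + m (x : M) (v : M) + m (u : M) (y : M) + m (u : M) (v : M) := by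
      simp only [map_add, LinearMap.add_apply]
      abel
    rw [e1, map_add, map_add, map_add, case11, case12, case21, case22, hfadd, hfadd,
      my_stdDiamond_apply]
    simp only [Prod.mk_add_mk, Prod.mk.injEq]
    constructor
    · abel
    · abel
  -- f intertwines the structure maps
  have P2 : ∀ X : M, f (α X) = LinearMap.prodMap (α₁e : A1 →ₗ[K] A1)
      (transposeH ((α₁e⁻¹ : A1 ≃ₗ[K] A1) : A1 →ₗ[K] A1)) (f X) := by
    intro X
    obtain ⟨x, u, rfl⟩ := hdec X
    have e1 : α ((x : M) + (u : M)) = ((α₁e x : A1) : M) + ((α₂r u : A2) : M) := by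
      rw [map_add]; rfl
    rw [e1, hfadd, hfadd, LinearMap.prodMap_apply]
    have e2 : Φlin (α₂r u) = transposeH ((α₁e⁻¹ : A1 ≃ₗ[K] A1) : A1 →ₗ[K] A1) (Φlin u) :=
      hΦα u
    simp only [LinearMap.prodMap_apply, LinearEquiv.coe_coe, Prod.mk.injEq]
    exact ⟨trivial, e2⟩
  -- f preserves the forms
  have P3 : ∀ X Y : M, ω X Y = stdOmega K A1 (f X) (f Y) := by
    intro X Y
    obtain ⟨x, u, rfl⟩ := hdec X
    obtain ⟨y, v, rfl⟩ := hdec Y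
    rw [hfadd, hfadd, my_stdOmega_apply]
    simp only [map_add, LinearMap.add_apply]
    rw [hi1 x x.2 y y.2, hi2 u u.2 v v.2, hΦapp, hΦapp, hsk (x : M) (v : M)]
    ring
  -- images of the two halves
  have hfx' : ∀ (z : M) (hz : z ∈ A1), f z = (⟨z, hz⟩, 0) := fun z hz => hfx ⟨z, hz⟩
  have hfu' : ∀ (z : M) (hz : z ∈ A2), f z = (0, Φlin ⟨z, hz⟩) := fun z hz => hfu ⟨z, hz⟩
  have P4 : Submodule.map (f : M →ₗ[K] A1 × (A1 →ₗ[K] K)) A1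
      = LinearMap.range (LinearMap.inl K A1 (A1 →ₗ[K] K)) := by
    apply le_antisymm
    · rintro c ⟨z, hz, rfl⟩
      exact ⟨⟨z, hz⟩, by
        simp only [LinearEquiv.coe_coe, LinearMap.inl_apply]
        exact (hfx' z hz).symm⟩
    · rintro c ⟨a, rfl⟩
      exact ⟨(a : M), a.2, by
        simp only [LinearEquiv.coe_coe, LinearMap.inl_apply]
        exact hfx' (a : M) a.2⟩
  have P5 : Submodule.map (f : M →ₗ[K] A1 × (A1 →ₗ[K] K)) A2
      = LinearMap.range (LinearMap.inr K A1 (A1 →ₗ[K] K)) := by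
    apply le_antisymm
    · rintro c ⟨z, hz, rfl⟩
      exact ⟨Φlin ⟨z, hz⟩, by
        simp only [LinearEquiv.coe_coe, LinearMap.inr_apply]
        exact (hfu' z hz).symm⟩
    · rintro c ⟨ξ, rfl⟩
      refine ⟨((Φe.symm ξ : A2) : M), (Φe.symm ξ).2, ?_⟩
      simp only [LinearEquiv.coe_coe, LinearMap.inr_apply]
      rw [hfu (Φe.symm ξ)]
      rw [show Φlin (Φe.symm ξ) = ξ from Φe.apply_symm_apply ξ]
  -- Hom-pre-Lie structure on the dual
  have hpl2 : IsHomPreLie m₂ α₂r := by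
    constructor
    · intro a b
      exact Subtype.ext (hαm (a : M) (b : M))
    · intro a b c
      apply Subtype.ext
      have h0 := hpl.2 (a : M) (b : M) (c : M)
      simpa [hm₂def, AddSubgroupClass.coe_sub, hα₂coe] using h0
  have P6 : IsHomPreLie mc (transposeH ((α₁e⁻¹ : A1 ≃ₗ[K] A1) : A1 →ₗ[K] A1)) := by
    exact isHomPreLie_of_equiv Φe m₂ α₂r mc
      (transposeH ((α₁e⁻¹ : A1 ≃ₗ[K] A1) : A1 →ₗ[K] A1))
      (fun u v => (hmc' u v).symm) (fun u => hΦα u) hpl2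
  -- the standard Manin triple by transport
  have P7 : IsManinTriple (stdDiamond m₁ α₁e mc)
      (LinearMap.prodMap (α₁e : A1 →ₗ[K] A1)
        (transposeH ((α₁e⁻¹ : A1 ≃ₗ[K] A1) : A1 →ₗ[K] A1)))
      (stdOmega K A1)
      (LinearMap.range (LinearMap.inl K A1 (A1 →ₗ[K] K)))
      (LinearMap.range (LinearMap.inr K A1 (A1 →ₗ[K] K))) := by
    exact maninTriple_of_equiv f m (α : M →ₗ[K] M) ω A1 A2 _ _ _ _ _
      P1 (fun X => P2 X) P3 P4 P5 h
  exact ⟨m₁, α₁e, mc, f, fun x y => rfl, fun x => rfl, P6, P7, P1, P2, P4, P5, P3,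
    fun x u => hfadd x u⟩
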